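/- arXiv:1111.2414 — 2 statements merged into one kernel-verified Lean document; each statement's English description precedes it below -/
import Mathlib

section
/- Let λ ∈ (0,1), λ < 0.3438, and let g(q) = log((1/4)^q + (5/12)^q + (1/3)^q)/log λ. Then for all q > 3/2, g(q) < q - 1. -/
open Real

lemma key_jensen (q : ℝ) (hq : 3/2 ≤ q) :
    ((1/4:ℝ) * Real.sqrt (1/4) + (5/12) * Real.sqrt (5/12) + (1/3) * Real.sqrt (1/3))
      ^ (2*(q-1)) ≤ (1/4:ℝ) ^ q + (5/12:ℝ) ^ q + (1/3:ℝ) ^ q := by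
  have h := Real.rpow_arith_mean_le_arith_mean_rpow (Finset.univ : Finset (Fin 3))
      ![1/4, 5/12, 1/3] ![Real.sqrt (1/4), Real.sqrt (5/12), Real.sqrt (1/3)]
      (by intro i _; fin_cases i <;> norm_num)
      (by simp [Fin.sum_univ_three]; norm_num)
      (by intro i _; fin_cases i <;> exact Real.sqrt_nonneg _)
      (p := 2*(q-1)) (by linarith)
  simp only [Fin.sum_univ_three, Matrix.cons_val_zero, Matrix.cons_val_one, Matrix.head_cons,
    Matrix.cons_val_two, Matrix.tail_cons] at h
  have e : ∀ a : ℝ, 0 < a → a * Real.sqrt a ^ (2*(q-1)) = a ^ q := by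
    intro a ha
    rw [Real.sqrt_eq_rpow, ← Real.rpow_mul ha.le]
    rw [show (1/2) * (2*(q-1)) = q - 1 by ring]
    rw [← Real.rpow_one_add' (by positivity) (by intro hc; nlinarith)]
    ring_nf
  rw [e (1/4) (by norm_num), e (5/12) (by norm_num), e (1/3) (by norm_num)] at h
  exact h

theorem g_lt_q_sub_one (lam : ℝ) (h1 : lam ∈ Set.Ioo (0 : ℝ) 1) (h2 : lam < 0.3438) :
    ∀ q : ℝ, 3/2 < q →
      Real.log ((1/4 : ℝ) ^ q + (5/12 : ℝ) ^ q + (1/3 : ℝ) ^ q) / Real.log lam < q - 1 := by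
  intro q hq
  set B : ℝ := (1/4:ℝ) * Real.sqrt (1/4) + (5/12) * Real.sqrt (5/12) + (1/3) * Real.sqrt (1/3)
    with hBdef
  have s1 : Real.sqrt (1/4) = 1/2 := by
    rw [show (1/4:ℝ) = (1/2)^2 by norm_num, Real.sqrt_sq (by norm_num)]
  have s2 : (0.645497 : ℝ) ≤ Real.sqrt (5/12) := by
    nlinarith [Real.sq_sqrt (show (0:ℝ) ≤ 5/12 by norm_num), Real.sqrt_nonneg (5/12 : ℝ)]
  have s3 : (0.57735 : ℝ) ≤ Real.sqrt (1/3) := by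
    nlinarith [Real.sq_sqrt (show (0:ℝ) ≤ 1/3 by norm_num), Real.sqrt_nonneg (1/3 : ℝ)]
  have hBpos : 0 < B := by rw [hBdef, s1]; nlinarith
  have hB2 : (0.3438 : ℝ) ≤ B ^ 2 := by
    have : (0.586407 : ℝ) ≤ B := by rw [hBdef, s1]; nlinarith
    nlinarith
  have hkey := key_jensen q hq.le
  have e1 : B ^ (2*(q-1)) = (B ^ 2) ^ (q-1) := by
    rw [Real.rpow_mul hBpos.le, Real.rpow_two]
  have h3 : (0.3438 : ℝ) ^ (q-1) ≤ (B^2) ^ (q-1) :=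
    Real.rpow_le_rpow (by norm_num) hB2 (by linarith)
  have h4 : lam ^ (q-1) < (0.3438 : ℝ) ^ (q-1) :=
    Real.rpow_lt_rpow h1.1.le h2 (by linarith)
  have h5 : lam ^ (q-1) < (1/4:ℝ) ^ q + (5/12:ℝ) ^ q + (1/3:ℝ) ^ q := by
    rw [e1] at hkey; linarith
  have h6 := Real.log_lt_log (Real.rpow_pos_of_pos h1.1 _) h5
  rw [Real.log_rpow h1.1] at h6
  have hlog : Real.log lam < 0 := Real.log_neg h1.1 h1.2
  rw [div_lt_iff_of_neg hlog]
  linarith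
end

section
/- Let λ = 1/β_n where β_n is the largest real root of x^n - x^{n-1} - ... - x + 1 for some n ≥ 5, and consider the IFS {S_1(x)=λx-1, S_2(x)=λx+1}. Then the two words of length n+1, I = 1 2^{n-1} 1 and J = 2 1^{n-1} 2 (i.e., I starts and ends with 1 with n-1 twos in between, J starts and ends with 2 with n-1 ones in between), satisfy S_{I} = S_{J} as affine maps, and 2/2^{n+1} > λ^{n+1}. -/
/-! The polynomial `P x = x ^ n - (x + ⋯ + x ^ (n - 1)) + 1` is palindromic, so together with `β`
its reciprocal `λ` is a root, and `P λ = 0` is exactly the relation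
`λ ^ n + 1 = λ + ⋯ + λ ^ (n - 1)` that makes the two affine words agree.

For the inequality, `(x - 1) * P x = x ^ (n + 1) - 2 * x ^ n + 2 * x - 1` is nonpositive at
`c = 2 - 4 / 2 ^ n` and positive at `2`, so `P` has a root in `[c, 2]` and `β ≥ c`.
Bernoulli's inequality for `c = 2 * (1 - 2 / 2 ^ n)` gives
`c ^ (n + 1) ≥ 2 ^ (n + 1) - 4 * (n + 1) > 2 ^ n`. -/

open Finset

def salemPoly {R : Type*} [CommRing R] (n : ℕ) (x : R) : R :=
  x ^ n - ∑ k ∈ Icc 1 (n - 1), x ^ k + 1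

section CommRing

variable {R : Type*} [CommRing R]

theorem sum_Icc_one_pow_eq_mul_geom_sum (x : R) (m : ℕ) :
    ∑ k ∈ Icc 1 m, x ^ k = x * ∑ k ∈ range m, x ^ k := by
  rw [← Ico_add_one_right_eq_Icc, sum_Ico_eq_sum_range, Nat.add_sub_cancel, mul_sum]
  simp only [add_comm 1, pow_succ']

theorem sub_one_mul_salemPoly {n : ℕ} (hn : 1 ≤ n) (x : R) :
    (x - 1) * salemPoly n x = x ^ (n + 1) - 2 * x ^ n + 2 * x - 1 := by
  obtain ⟨m, rfl⟩ := Nat.exists_eq_add_of_le' hn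
  rw [salemPoly, Nat.add_sub_cancel, sum_Icc_one_pow_eq_mul_geom_sum]
  linear_combination (-x) * geom_sum_mul x m

theorem iterate_affine_apply (a b : R) (m : ℕ) (x : R) :
    (fun y => a * y + b)^[m] x = a ^ m * x + b * ∑ k ∈ range m, a ^ k := by
  induction m with
  | zero => simp
  | succ m ih =>
    rw [Function.iterate_succ_apply', ih, geom_sum_succ]
    ring

theorem affine_words_eq_of_salemPoly_eq_zero {n : ℕ} (hn : 1 ≤ n) {a : R}
    (ha : salemPoly n a = 0) :
    (fun x => a * x - 1) ∘ (fun x => a * x + 1)^[n - 1] ∘ (fun x => a * x - 1) =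
      (fun x => a * x + 1) ∘ (fun x => a * x - 1)^[n - 1] ∘ (fun x => a * x + 1) := by
  obtain ⟨m, rfl⟩ := Nat.exists_eq_add_of_le' hn
  rw [salemPoly, Nat.add_sub_cancel, sum_Icc_one_pow_eq_mul_geom_sum] at ha
  funext x
  simp only [Function.comp_apply, Nat.add_sub_cancel, sub_eq_add_neg, iterate_affine_apply]
  linear_combination (-2) * ha

end CommRing

theorem pow_mul_salemPoly_inv {K : Type*} [Field K] {x : K} (hx : x ≠ 0) (n : ℕ) :
    x ^ n * salemPoly n x⁻¹ = salemPoly n x := by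
  have reflect_mem : ∀ k ∈ Icc 1 (n - 1), n - k ∈ Icc 1 (n - 1) := fun k hk => by
    simp only [mem_Icc] at hk ⊢; omega
  have reflect_reflect : ∀ k ∈ Icc 1 (n - 1), n - (n - k) = k := fun k hk => by
    simp only [mem_Icc] at hk; omega
  have reflect : x ^ n * ∑ k ∈ Icc 1 (n - 1), x⁻¹ ^ k = ∑ k ∈ Icc 1 (n - 1), x ^ k := by
    rw [mul_sum]
    refine sum_nbij' (n - ·) (n - ·) reflect_mem reflect_mem reflect_reflect reflect_reflect
      fun k hk => ?_
    rw [inv_pow, pow_sub₀ x hx ((mem_Icc.mp hk).2.trans (Nat.sub_le n 1))]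
  rw [salemPoly, salemPoly, mul_add, mul_sub, reflect, inv_pow,
    mul_inv_cancel₀ (pow_ne_zero n hx)]
  ring

theorem eight_mul_le_two_pow_add_eight {n : ℕ} (hn : 5 ≤ n) : 8 * n ≤ 2 ^ n + 8 := by
  induction n, hn using Nat.le_induction with
  | base => norm_num
  | succ m hm ih =>
    have : 8 ≤ 2 ^ m := le_trans (by norm_num) (Nat.pow_le_pow_right two_pos hm)
    rw [pow_succ]
    omega

theorem two_pow_mul_le_pow_two_sub (m n : ℕ) :
    (2 : ℝ) ^ m * (1 - 2 * m / 2 ^ n) ≤ (2 - 4 / 2 ^ n) ^ m := by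
  have hε : -2 ≤ -(2 / (2 : ℝ) ^ n) := by
    rw [neg_le_neg_iff, div_le_iff₀ (by positivity)]
    linarith [one_le_pow₀ (M₀ := ℝ) one_le_two (n := n)]
  calc (2 : ℝ) ^ m * (1 - 2 * m / 2 ^ n) = 2 ^ m * (1 + m * -(2 / 2 ^ n)) := by ring
    _ ≤ 2 ^ m * (1 + -(2 / 2 ^ n)) ^ m := by gcongr; exact one_add_mul_le_pow hε m
    _ = (2 - 4 / 2 ^ n) ^ m := by rw [← mul_pow]; ring

theorem one_lt_two_sub_four_div_two_pow {n : ℕ} (hn : 3 ≤ n) : 1 < 2 - 4 / (2 : ℝ) ^ n := by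
  have h8 : (8 : ℝ) ≤ 2 ^ n := by
    calc (8 : ℝ) = 2 ^ 3 := by norm_num
      _ ≤ 2 ^ n := pow_le_pow_right₀ one_le_two hn
  rw [lt_sub_comm, div_lt_iff₀ (by positivity)]
  linarith

theorem salemPoly_two_sub_nonpos {n : ℕ} (hn : 5 ≤ n) :
    salemPoly n (2 - 4 / 2 ^ n : ℝ) ≤ 0 := by
  have h8n : 8 * (n : ℝ) ≤ 2 ^ n + 8 := by exact_mod_cast eight_mul_le_two_pow_add_eight hn
  have hpos : (0 : ℝ) < 2 ^ n := by positivity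
  have hbern : 2 ^ n - 2 * n ≤ (2 - 4 / 2 ^ n : ℝ) ^ n := by
    convert two_pow_mul_le_pow_two_sub n n using 1
    field_simp
  have hc1 := one_lt_two_sub_four_div_two_pow (by omega : 3 ≤ n)
  have hc : (2 - 4 / 2 ^ n : ℝ) * 2 ^ n = 2 * 2 ^ n - 4 := by field_simp
  generalize (2 - 4 / 2 ^ n : ℝ) = c at hbern hc1 hc ⊢
  have hscaled : (c ^ (n + 1) - 2 * c ^ n + 2 * c - 1) * 2 ^ n = -4 * c ^ n + 3 * 2 ^ n - 8 := by
    rw [pow_succ]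
    linear_combination (c ^ n + 2) * hc
  have hQ : c ^ (n + 1) - 2 * c ^ n + 2 * c - 1 ≤ 0 :=
    nonpos_of_mul_nonpos_left (by linarith) hpos
  rw [← sub_one_mul_salemPoly (by omega)] at hQ
  exact nonpos_of_mul_nonpos_right hQ (by linarith)

theorem two_pow_lt_two_sub_pow_succ {n : ℕ} (hn : 5 ≤ n) :
    (2 : ℝ) ^ n < (2 - 4 / 2 ^ n) ^ (n + 1) := by
  have h8n : 8 * (n : ℝ) ≤ 2 ^ n + 8 := by exact_mod_cast eight_mul_le_two_pow_add_eight hn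
  have hn5 : (5 : ℝ) ≤ n := by exact_mod_cast hn
  calc (2 : ℝ) ^ n < 2 * 2 ^ n - 4 * (n + 1) := by linarith
    _ = 2 ^ (n + 1) * (1 - 2 * (n + 1 : ℕ) / 2 ^ n) := by
      rw [pow_succ]; field_simp; push_cast; ring
    _ ≤ (2 - 4 / 2 ^ n) ^ (n + 1) := two_pow_mul_le_pow_two_sub (n + 1) n

theorem two_pow_lt_pow_succ_of_isGreatest {n : ℕ} (hn : 5 ≤ n) {β : ℝ}
    (hβ : IsGreatest {x : ℝ | salemPoly n x = 0} β) : 2 ^ n < β ^ (n + 1) := by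
  have hcont : Continuous (salemPoly n : ℝ → ℝ) := by unfold salemPoly; fun_prop
  have htwo : salemPoly n (2 : ℝ) = 3 := by
    have h := sub_one_mul_salemPoly (by omega : 1 ≤ n) (2 : ℝ)
    rw [pow_succ] at h
    linarith
  have hc1 := one_lt_two_sub_four_div_two_pow (by omega : 3 ≤ n)
  have hc2 : 2 - 4 / 2 ^ n ≤ (2 : ℝ) := sub_le_self 2 (by positivity)
  obtain ⟨x, hx, hx0⟩ := intermediate_value_Icc hc2
    hcont.continuousOn ⟨salemPoly_two_sub_nonpos hn, htwo ▸ zero_le_three⟩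
  calc (2 : ℝ) ^ n < (2 - 4 / 2 ^ n) ^ (n + 1) := two_pow_lt_two_sub_pow_succ hn
    _ ≤ β ^ (n + 1) := pow_le_pow_left₀ (by linarith) (hx.1.trans (hβ.2 hx0)) _

theorem word_coincidence_salem (n : ℕ) (hn : 5 ≤ n) (β lam : ℝ)
    (hβ : IsGreatest {x : ℝ | x ^ n - ∑ k ∈ Finset.Icc 1 (n - 1), x ^ k + 1 = 0} β)
    (hlam : lam = 1 / β) :
    let S₁ : ℝ → ℝ := fun x => lam * x - 1
    let S₂ : ℝ → ℝ := fun x => lam * x + 1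
    (S₁ ∘ S₂^[n - 1] ∘ S₁ = S₂ ∘ S₁^[n - 1] ∘ S₂) ∧
      2 / 2 ^ (n + 1) > lam ^ (n + 1) := by
  intro S₁ S₂
  have hβ_pow : (2 : ℝ) ^ n < β ^ (n + 1) := two_pow_lt_pow_succ_of_isGreatest hn hβ
  have hβ0 : β ≠ 0 := by
    rintro rfl
    rw [zero_pow n.succ_ne_zero] at hβ_pow
    exact lt_asymm hβ_pow (by positivity)
  have hlam_root : salemPoly n lam = 0 := by
    have h := pow_mul_salemPoly_inv hβ0 n
    rw [show salemPoly n β = 0 from hβ.1, ← one_div, ← hlam] at h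
    exact (mul_eq_zero.mp h).resolve_left (pow_ne_zero n hβ0)
  refine ⟨affine_words_eq_of_salemPoly_eq_zero (by omega) hlam_root, ?_⟩
  have h_two_div : (2 : ℝ) / 2 ^ (n + 1) = 1 / 2 ^ n := by rw [pow_succ]; field_simp
  rw [gt_iff_lt, h_two_div, hlam, one_div_pow]
  exact one_div_lt_one_div_of_lt (by positivity) hβ_pow
end
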